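/- arXiv:2503.07731 — 4 statements merged into one kernel-verified Lean document; each statement's English description precedes it below -/
import Mathlib

section
/- Let G^{uT} and G^{tT} be n×n complex matrices with G^{tT} invertible, related by (G^{tT})^{-1} - I = ((G^{uT})^{-1} - I)·U₂ where U₂ is the block diagonal matrix diag(I₁, -I₂) (so U₂² = I). Then for any r ≥ 1, det[ ∏_{i=r}^{1} G^{tT}_i · (I + ∏_{i=r}^{1}((G^{tT}_i)^{-1} - I)) ] · ∏_{i=1}^{r} det(Z_i) = det[ ∏_{i=r}^{1} G^{uT}_i · (I + ∏_{i=r}^{1}(((G^{uT}_i)^{-1} - I)U₂)) ], where Z_i = det-factor satisfying det(Z_i G^{tT}_i) = det(G^{uT}_i), i.e. Z_i = det(G^{uT}_i)/det(G^{tT}_i). -/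
open Matrix

/-- Product of matrices in decreasing index order: `G (r-1) * ⋯ * G 0`. -/
noncomputable def prodDesc {n : Type*} [Fintype n] [DecidableEq n] {r : ℕ}
    (G : Fin r → Matrix n n ℂ) : Matrix n n ℂ :=
  ((List.finRange r).reverse.map G).prod

/-! The relation makes the two "`1 + ∏`" factors literally equal, so the identity reduces to
multiplicativity of the determinant: `det (∏ Gtᵢ) · ∏ det Guᵢ / det Gtᵢ = det (∏ Guᵢ)`. -/

theorem det_prodDesc {n : Type*} [Fintype n] [DecidableEq n] {r : ℕ}
    (G : Fin r → Matrix n n ℂ) : (prodDesc G).det = ∏ i, (G i).det := by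
  rw [prodDesc, ← coe_detMonoidHom, MonoidHom.map_list_prod, List.map_map,
    List.map_reverse, List.prod_reverse, ← Fin.prod_univ_def]
  rfl

theorem twisted_grover_eq_modified_grover_general {n : Type*} [Fintype n] [DecidableEq n]
    (r : ℕ)
    (Gu Gt : Fin r → Matrix n n ℂ) (U₂ : Matrix n n ℂ)
    (hGt : ∀ i, IsUnit (Gt i))
    (hrel : ∀ i, (Gt i)⁻¹ - 1 = ((Gu i)⁻¹ - 1) * U₂) :
    (prodDesc Gt * (1 + prodDesc (fun i => (Gt i)⁻¹ - 1))).det *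
      ∏ i, ((Gu i).det / (Gt i).det) =
    (prodDesc Gu * (1 + prodDesc (fun i => ((Gu i)⁻¹ - 1) * U₂))).det := by
  have hdet : (∏ i, (Gt i).det) ≠ 0 :=
    Finset.prod_ne_zero_iff.mpr fun i _ => ((isUnit_iff_isUnit_det _).mp (hGt i)).ne_zero
  rw [funext hrel, det_mul, det_mul, det_prodDesc, det_prodDesc, Finset.prod_div_distrib]
  field_simp

/-- The twisted Grover determinant times the normalization factors
`Zᵢ = det(G^{uT}ᵢ)/det(G^{tT}ᵢ)` equals the modified Grover determinant built from the
untwisted Green's functions with inserted `U₂` factors, whenever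
`(G^{tT}ᵢ)⁻¹ - I = ((G^{uT}ᵢ)⁻¹ - I) U₂` with `U₂² = I`. -/
theorem twisted_grover_eq_modified_grover {n : Type*} [Fintype n] [DecidableEq n]
    (r : ℕ) (hr : 1 ≤ r)
    (Gu Gt : Fin r → Matrix n n ℂ) (U₂ : Matrix n n ℂ) (hU₂ : U₂ * U₂ = 1)
    (hGu : ∀ i, IsUnit (Gu i)) (hGt : ∀ i, IsUnit (Gt i))
    (hrel : ∀ i, (Gt i)⁻¹ - 1 = ((Gu i)⁻¹ - 1) * U₂) :
    (prodDesc Gt * (1 + prodDesc (fun i => (Gt i)⁻¹ - 1))).det *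
      ∏ i, ((Gu i).det / (Gt i).det) =
    (prodDesc Gu * (1 + prodDesc (fun i => ((Gu i)⁻¹ - 1) * U₂))).det :=
  twisted_grover_eq_modified_grover_general r Gu Gt U₂ hGt hrel
end

section
/- (Drut reconstruction of the Grover determinant) For i = 1,…,r let G_i be invertible n×n complex matrices and set B_i = G_i^{-1} - I. Define the rn×rn block matrix T with diagonal blocks T_{ii} = G_i, blocks T_{i+1,i} = G_i - I for i = 1,…,r-1, block T_{1,r} = I - G_r, and all other blocks zero. Then det T = det[ ∏_{i=r}^{1} G_i · ( I + ∏_{i=r}^{1} B_i ) ]. -/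
open Matrix

/-!
Since `Bᵢ Gᵢ = 1 - Gᵢ`, the matrix `T` is `K · diag(G₀, …, G_{r-1})`, where `K` (`cyclicBidiagonal B`)
has identity diagonal blocks, subdiagonal blocks `-Bᵢ` and corner block `B_{r-1}`. Block elimination
factors `K = L U` with `L = 1 - subdiagonal B` unipotent lower triangular and
`U = 1 + X · (B_{r-1} in block column r-1)`, where the block column `X i = B_{i-1} ⋯ B₀` solves
`L X = e₀`. So `U` is upper triangular with a single nontrivial diagonal block `1 + X_{r-1} B_{r-1}`,
whose determinant is `det (1 + B_{r-1} ⋯ B₀)` by Sylvester's identity.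
-/

section DescProd

variable {α : Type*} [Monoid α]

def descProd {k : ℕ} (f : Fin k → α) : α :=
  ((List.finRange k).reverse.map f).prod

theorem descProd_succ {k : ℕ} (f : Fin (k + 1) → α) :
    descProd f = f (Fin.last k) * descProd fun i => f i.castSucc := by
  simp [descProd, List.finRange_succ_last, Function.comp_def]

def descPrefixProd {r : ℕ} (f : Fin r → α) (i : Fin r) : α :=
  descProd fun j : Fin i => f (Fin.castLE i.isLt.le j)

variable {m : ℕ} (f : Fin (m + 1) → α)

theorem descPrefixProd_zero : descPrefixProd f 0 = 1 := rfl

theorem descPrefixProd_succ (i : Fin m) :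
    descPrefixProd f i.succ = f i.castSucc * descPrefixProd f i.castSucc :=
  descProd_succ _

theorem mul_descPrefixProd_last :
    f (Fin.last m) * descPrefixProd f (Fin.last m) = descProd f :=
  (descProd_succ f).symm

end DescProd

namespace Matrix

section BlockTriangular

variable {ι n R : Type*} [Fintype ι] [LinearOrder ι] [Fintype n] [DecidableEq n] [CommRing R]

theorem det_comp_of_isUpperTriangular {M : Matrix ι ι (Matrix n n R)}
    (h : M.IsUpperTriangular) : (comp ι ι n n R M).det = ∏ i, (M i i).det := by
  have hM : (comp ι ι n n R M).BlockTriangular Prod.fst := fun p q hpq => by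
    simp [comp_apply, h hpq]
  rw [hM.det_fintype]
  refine Finset.prod_congr rfl fun i _ => ?_
  let e : {p : ι × n // p.1 = i} ≃ n :=
    (Equiv.prodSubtypeFstEquivSubtypeProd (p := (· = i))).trans (Equiv.uniqueProd n _)
  exact (det_reindex_self e _).symm.trans (congrArg det (ext fun a b => rfl))

theorem det_comp_of_isLowerTriangular {M : Matrix ι ι (Matrix n n R)}
    (h : M.IsLowerTriangular) : (comp ι ι n n R M).det = ∏ i, (M i i).det := by
  have hMt : (Mᵀ.map (·ᵀ)).IsUpperTriangular := fun i j hij => by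
    simp [h hij]
  rw [← det_transpose, transpose_comp, det_comp_of_isUpperTriangular hMt]
  simp

end BlockTriangular

theorem det_descProd {n R : Type*} [Fintype n] [DecidableEq n] [CommRing R] {k : ℕ}
    (f : Fin k → Matrix n n R) : (descProd f).det = ∏ i, (f i).det := by
  rw [descProd, ← coe_detMonoidHom, map_list_prod, List.map_map, List.map_reverse,
    List.prod_reverse, Fin.prod_univ_def]
  rfl

theorem vecMulVec_single_single {α : Type*} [MulZeroOneClass α] {m n : Type*} [DecidableEq m]
    [DecidableEq n] (i : m) (j : n) (a : α) :
    vecMulVec (Pi.single i 1) (Pi.single j a) = single i j a := by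
  ext k l
  simp only [vecMulVec_apply, Pi.single_apply, single_apply, eq_comm]
  split_ifs <;> simp_all

section Subdiagonal

variable {α : Type*}

def subdiagonal [Zero α] {r : ℕ} (v : Fin r → α) : Matrix (Fin r) (Fin r) α :=
  of fun i j => if (i : ℕ) = j + 1 then v j else 0

theorem subdiagonal_isLowerTriangular [Zero α] {r : ℕ} (v : Fin r → α) :
    (subdiagonal v).IsLowerTriangular := fun i j hij => by
  have : (i : ℕ) < j := hij
  simp [subdiagonal]
  omega

variable [NonUnitalNonAssocSemiring α] {m : ℕ} (v w : Fin (m + 1) → α)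

theorem subdiagonal_mulVec_zero : (subdiagonal v *ᵥ w) 0 = 0 := by
  simp [subdiagonal, mulVec, dotProduct]

theorem subdiagonal_mulVec_succ (i : Fin m) :
    (subdiagonal v *ᵥ w) i.succ = v i.castSucc * w i.castSucc := by
  have hj : ∀ j : Fin (m + 1), (i.succ : ℕ) = j + 1 ↔ j = i.castSucc := by
    intro j
    simp [Fin.ext_iff]
    omega
  simp only [mulVec, dotProduct, subdiagonal, of_apply, ite_mul, zero_mul, hj,
    Finset.sum_ite_eq', Finset.mem_univ, if_true]

end Subdiagonal

section CyclicBidiagonal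

variable {α : Type*} [Ring α] {m : ℕ} (v : Fin (m + 1) → α)

def cyclicBidiagonal : Matrix (Fin (m + 1)) (Fin (m + 1)) α :=
  1 - subdiagonal v + single 0 (Fin.last m) (v (Fin.last m))

theorem cyclicBidiagonal_mul_diagonal_apply (hm : m ≠ 0) (d : Fin (m + 1) → α)
    (i j : Fin (m + 1)) :
    (cyclicBidiagonal v * diagonal d) i j =
      if i = j then d j
      else if (i : ℕ) = j + 1 then -(v j * d j)
      else if (i : ℕ) = 0 ∧ (j : ℕ) = m then v j * d j
      else 0 := by
  rw [mul_diagonal]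
  simp only [cyclicBidiagonal, Matrix.add_apply, Matrix.sub_apply, Matrix.one_apply,
    subdiagonal, of_apply, Matrix.single_apply, Fin.ext_iff, Fin.val_zero, Fin.val_last]
  split_ifs <;> first
    | omega
    | (simp; done)
    | obtain rfl : j = Fin.last m := Fin.ext (by rw [Fin.val_last]; omega)
      simp

theorem one_sub_subdiagonal_mulVec_descPrefixProd :
    (1 - subdiagonal v) *ᵥ descPrefixProd v = Pi.single 0 1 := by
  ext i
  induction i using Fin.cases with
  | zero => simp [sub_mulVec, subdiagonal_mulVec_zero, descPrefixProd_zero]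
  | succ i => simp [sub_mulVec, subdiagonal_mulVec_succ, descPrefixProd_succ]

theorem cyclicBidiagonal_eq_mul :
    cyclicBidiagonal v = (1 - subdiagonal v) *
      (1 + vecMulVec (descPrefixProd v) (Pi.single (Fin.last m) (v (Fin.last m)))) := by
  rw [mul_add, mul_one, mul_vecMulVec, one_sub_subdiagonal_mulVec_descPrefixProd,
    vecMulVec_single_single, cyclicBidiagonal]

end CyclicBidiagonal

theorem det_comp_cyclicBidiagonal {n R : Type*} [Fintype n] [DecidableEq n] [CommRing R]
    {m : ℕ} (B : Fin (m + 1) → Matrix n n R) :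
    (comp _ _ _ _ R (cyclicBidiagonal B)).det = (1 + descProd B).det := by
  set U := 1 + vecMulVec (descPrefixProd B) (Pi.single (Fin.last m) (B (Fin.last m)))
  have hL : (1 - subdiagonal B).IsLowerTriangular :=
    blockTriangular_one.sub (subdiagonal_isLowerTriangular B)
  have hU : U.IsUpperTriangular := fun i j hij => by
    have hj : j ≠ Fin.last m := (hij.trans_le (Fin.le_last i)).ne
    simp only [U, add_apply, vecMulVec_apply, Pi.single_eq_of_ne hj, mul_zero, add_zero]
    exact one_apply_ne hij.ne'
  have hLdiag : ∀ i, (1 - subdiagonal B) i i = 1 := fun i => by simp [subdiagonal]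
  have hUdiag : ∀ i, i ≠ Fin.last m → U i i = 1 := fun i hi => by
    simp [U, vecMulVec_apply, hi]
  rw [cyclicBidiagonal_eq_mul, ← compRingEquiv_apply, map_mul, det_mul,
    compRingEquiv_apply, compRingEquiv_apply, det_comp_of_isLowerTriangular hL,
    det_comp_of_isUpperTriangular hU]
  simp only [hLdiag, det_one, Finset.prod_const_one, one_mul]
  rw [Fintype.prod_eq_single (Fin.last m) fun i hi => by rw [hUdiag i hi, det_one]]
  simp only [U, add_apply, one_apply_eq, vecMulVec_apply, Pi.single_eq_same]
  rw [det_one_add_mul_comm, mul_descPrefixProd_last]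

end Matrix

/-- Drut's reconstruction of the Grover determinant: the determinant of the block
cyclic bidiagonal matrix `T` (with diagonal blocks `Gᵢ`, subdiagonal blocks `Gᵢ - I`,
and corner block `I - Gᵣ`) equals `det[∏ᵢ Gᵢ (I + ∏ᵢ (Gᵢ⁻¹ - I))]`, with no matrix
inversion on the left-hand side. -/
theorem drut_reconstruction {n : Type*} [Fintype n] [DecidableEq n]
    (r : ℕ) (hr : 2 ≤ r)
    (G : Fin r → Matrix n n ℂ) (hG : ∀ i, IsUnit (G i)) :
    let T : Matrix (Fin r × n) (Fin r × n) ℂ :=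
      Matrix.of fun p q =>
        if p.1 = q.1 then G q.1 p.2 q.2
        else if (p.1 : ℕ) = (q.1 : ℕ) + 1 then (G q.1 - 1) p.2 q.2
        else if (p.1 : ℕ) = 0 ∧ (q.1 : ℕ) = r - 1 then ((1 : Matrix n n ℂ) - G q.1) p.2 q.2
        else 0
    T.det = (prodDesc G * (1 + prodDesc (fun i => (G i)⁻¹ - 1))).det := by
  intro T
  obtain ⟨m, rfl⟩ : ∃ m, r = m + 1 := ⟨r - 1, by omega⟩
  set B : Fin (m + 1) → Matrix n n ℂ := fun i => (G i)⁻¹ - 1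
  have hBG : ∀ i, B i * G i = 1 - G i := fun i => by
    simp [B, sub_mul, nonsing_inv_mul _ ((isUnit_iff_isUnit_det _).mp (hG i))]
  have hT : T = comp _ _ _ _ ℂ (cyclicBidiagonal B) * comp _ _ _ _ ℂ (diagonal G) := by
    rw [← compRingEquiv_apply, ← compRingEquiv_apply, ← map_mul]
    ext p q
    simp only [T, of_apply, compRingEquiv_apply, comp_apply,
      cyclicBidiagonal_mul_diagonal_apply B (by omega : m ≠ 0), hBG, Nat.add_sub_cancel]
    split_ifs <;> simp
  rw [hT, det_mul, det_comp_cyclicBidiagonal,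
    det_comp_of_isUpperTriangular (blockTriangular_diagonal G)]
  change _ = (descProd G * (1 + descProd B)).det
  simp [det_mul, det_descProd, mul_comm]
end

section
/- (Stable inversion identity) Let B = U D V be an n×n complex matrix with U invertible, D invertible diagonal with positive real entries, V invertible. Write D = D₊ D₋ with D₊ = max(D, I) and D₋ = min(D, I) entrywise. If I + B is invertible, then (I + B)^{-1} = (D₊^{-1} U^{-1} + D₋ V)^{-1} D₊^{-1} U^{-1}. -/
/-!
Since `D = D₊ D₋`, we have `1 + U D V = (U D₊) (D₊⁻¹ U⁻¹ + D₋ V)`, where `D₊⁻¹` is a genuine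
inverse because every entry of `D₊` is at least `1`. Inverting this product gives the identity.
-/

open Matrix

namespace Matrix

variable {n R : Type*} [Fintype n] [DecidableEq n] [CommRing R]

theorem mul_mul_nonsing_inv_mul_add_mul {U P : Matrix n n R} (hU : IsUnit U) (hP : IsUnit P)
    (M V : Matrix n n R) :
    U * P * (P⁻¹ * U⁻¹ + M * V) = 1 + U * (P * M) * V := by
  have hPP : P * P⁻¹ = 1 := mul_nonsing_inv P ((isUnit_iff_isUnit_det P).mp hP)
  have hUU : U * U⁻¹ = 1 := mul_nonsing_inv U ((isUnit_iff_isUnit_det U).mp hU)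
  calc U * P * (P⁻¹ * U⁻¹ + M * V) = U * (P * P⁻¹) * U⁻¹ + U * (P * M) * V := by noncomm_ring
    _ = 1 + U * (P * M) * V := by rw [hPP, mul_one, hUU]

theorem diagonal_max_one_mul_diagonal_min_one (d : n → ℝ) :
    (diagonal fun k => ((max (d k) 1 : ℝ) : ℂ)) * diagonal (fun k => ((min (d k) 1 : ℝ) : ℂ)) =
      diagonal fun k => (d k : ℂ) := by
  rw [diagonal_mul_diagonal]
  congr 1
  funext k
  rw [← Complex.ofReal_mul, max_mul_min, mul_one]

theorem isUnit_diagonal_max_one (d : n → ℝ) :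
    IsUnit (diagonal fun k => ((max (d k) 1 : ℝ) : ℂ)) := by
  refine isUnit_diagonal.mpr (Pi.isUnit_iff.mpr fun k => isUnit_iff_ne_zero.mpr ?_)
  exact Complex.ofReal_ne_zero.mpr (lt_max_of_lt_right one_pos).ne'

end Matrix

theorem stable_inversion_identity_general {n : Type*} [Fintype n] [DecidableEq n]
    (U V : Matrix n n ℂ) (hU : IsUnit U) (d : n → ℝ) :
    let D : Matrix n n ℂ := Matrix.diagonal fun k => (d k : ℂ)
    let Dp : Matrix n n ℂ := Matrix.diagonal fun k => ((max (d k) 1 : ℝ) : ℂ)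
    let Dm : Matrix n n ℂ := Matrix.diagonal fun k => ((min (d k) 1 : ℝ) : ℂ)
    let B : Matrix n n ℂ := U * D * V
    IsUnit (1 + B) →
      (1 + B)⁻¹ = (Dp⁻¹ * U⁻¹ + Dm * V)⁻¹ * (Dp⁻¹ * U⁻¹) := by
  intro D Dp Dm B _
  have hfactor : U * Dp * (Dp⁻¹ * U⁻¹ + Dm * V) = 1 + B := by
    rw [mul_mul_nonsing_inv_mul_add_mul hU (isUnit_diagonal_max_one d),
      diagonal_max_one_mul_diagonal_min_one]
  rw [← hfactor, Matrix.mul_inv_rev, Matrix.mul_inv_rev]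

/-- Stable inversion identity: for `B = U D V` with `U, V` invertible and `D` diagonal
with positive entries, writing `D = D₊ D₋` with `D₊ = max(D, I)`, `D₋ = min(D, I)`, if
`I + B` is invertible then `(I + B)⁻¹ = (D₊⁻¹ U⁻¹ + D₋ V)⁻¹ D₊⁻¹ U⁻¹`. -/
theorem stable_inversion_identity {n : Type*} [Fintype n] [DecidableEq n]
    (U V : Matrix n n ℂ) (hU : IsUnit U) (hV : IsUnit V)
    (d : n → ℝ) (hd : ∀ k, 0 < d k) :
    let D : Matrix n n ℂ := Matrix.diagonal fun k => (d k : ℂ)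
    let Dp : Matrix n n ℂ := Matrix.diagonal fun k => ((max (d k) 1 : ℝ) : ℂ)
    let Dm : Matrix n n ℂ := Matrix.diagonal fun k => ((min (d k) 1 : ℝ) : ℂ)
    let B : Matrix n n ℂ := U * D * V
    IsUnit (1 + B) →
      (1 + B)⁻¹ = (Dp⁻¹ * U⁻¹ + Dm * V)⁻¹ * (Dp⁻¹ * U⁻¹) :=
  stable_inversion_identity_general U V hU d
end

section
/- (Rank-2 untwisted moment) With ρ^{T₂} the untwisted fermionic partial transpose as above and X₂ = (-1)^{∑_{j∈A₂} n̂_j} the diagonal parity operator on subsystem A₂ (acting as X₂|n⟩ = (-1)^{τ₂(n)}|n⟩), one has Tr[(ρ^{T₂})²] = Tr(ρ X₂ ρ X₂) for every linear operator ρ on the Fock space. -/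
/-!
The partial transpose only moves entries: the entry at `(m, m')` comes from `(n, n̄)` with
`(n, n̄) = (mix m m', mix m' m)`, an involution of pairs. So `Tr[(ρ^{T₂})²]` is the sum of
`ρ n n̄ ρ n̄ n` weighted by `φ(n,n̄) φ(n̄,n)`; in this product the sign `(-1)^{(τ₁+τ̄₁)(τ₂+τ̄₂)}`
occurs squared and the two factors `i^{(τ₂+τ̄₂) mod 2}` combine to `(-1)^{τ₂+τ̄₂}`, which are
exactly the weights of `Tr(ρ X₂ ρ X₂)`.
-/

open Matrix

variable {A₁ A₂ : Type*} [Fintype A₁] [DecidableEq A₁] [Fintype A₂] [DecidableEq A₂]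

/-- Number of occupied modes in subsystem `A₁` of the occupation bit string `n`. -/
def tau1 (n : A₁ ⊕ A₂ → Bool) : ℕ := ∑ a : A₁, if n (Sum.inl a) then 1 else 0

/-- Number of occupied modes in subsystem `A₂` of the occupation bit string `n`. -/
def tau2 (n : A₁ ⊕ A₂ → Bool) : ℕ := ∑ b : A₂, if n (Sum.inr b) then 1 else 0

/-- The bit string taking its `A₁` part from `m` and its `A₂` part from `m'`. -/
def mix (m m' : A₁ ⊕ A₂ → Bool) : A₁ ⊕ A₂ → Bool :=
  fun x => match x with
  | Sum.inl a => m (Sum.inl a)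
  | Sum.inr b => m' (Sum.inr b)

/-- The phase `(-1)^{φ(n,n̄)}` with
`φ(n,n̄) = ((τ₂+τ̄₂) mod 2)/2 + (τ₁+τ̄₁)(τ₂+τ̄₂)`; the half-integer first term is the
phase `i^{(τ₂+τ̄₂) mod 2}`. -/
noncomputable def fptPhase (n n' : A₁ ⊕ A₂ → Bool) : ℂ :=
  Complex.I ^ ((tau2 n + tau2 n') % 2) *
    (-1 : ℂ) ^ ((tau1 n + tau1 n') * (tau2 n + tau2 n'))

/-- The untwisted fermionic partial transpose of an operator on the Fock space,
`(|n₁,n₂⟩⟨n̄₁,n̄₂|)^{T₂} = (-1)^{φ(n,n̄)} |n₁,n̄₂⟩⟨n̄₁,n₂|`. -/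
noncomputable def fpt (ρ : Matrix (A₁ ⊕ A₂ → Bool) (A₁ ⊕ A₂ → Bool) ℂ) :
    Matrix (A₁ ⊕ A₂ → Bool) (A₁ ⊕ A₂ → Bool) ℂ :=
  Matrix.of fun m m' => fptPhase (mix m m') (mix m' m) * ρ (mix m m') (mix m' m)


/-- The diagonal parity operator on subsystem `A₂`: `X₂|n⟩ = (-1)^{τ₂(n)}|n⟩`. -/
noncomputable def X2 : Matrix (A₁ ⊕ A₂ → Bool) (A₁ ⊕ A₂ → Bool) ℂ :=
  Matrix.diagonal fun n => (-1 : ℂ) ^ (tau2 n)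

omit [Fintype A₁] [DecidableEq A₁] [Fintype A₂] [DecidableEq A₂] in
lemma mix_mix (m m' : A₁ ⊕ A₂ → Bool) : mix (mix m m') (mix m' m) = m := by
  funext x; cases x <;> rfl

omit [Fintype A₁] [DecidableEq A₁] [Fintype A₂] [DecidableEq A₂] in
lemma mix_prod_involutive :
    Function.Involutive fun p : (A₁ ⊕ A₂ → Bool) × (A₁ ⊕ A₂ → Bool) =>
      (mix p.1 p.2, mix p.2 p.1) :=
  fun p => Prod.ext (mix_mix p.1 p.2) (mix_mix p.2 p.1)

lemma Complex.I_pow_mod_two_sq (k : ℕ) : (Complex.I ^ (k % 2)) ^ 2 = (-1) ^ k := by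
  rw [← pow_mul, mul_comm, pow_mul, Complex.I_sq, ← neg_one_pow_eq_pow_mod_two]

omit [DecidableEq A₁] [DecidableEq A₂] in
lemma fptPhase_mul_fptPhase_swap (n n' : A₁ ⊕ A₂ → Bool) :
    fptPhase n n' * fptPhase n' n = (-1) ^ tau2 n * (-1) ^ tau2 n' := by
  rw [fptPhase, fptPhase, add_comm (tau2 n'), add_comm (tau1 n'), ← sq, mul_pow,
    Complex.I_pow_mod_two_sq, pow_right_comm, neg_one_sq, one_pow, mul_one, pow_add]

lemma Matrix.trace_mul_eq_sum_sum {n R : Type*} [Fintype n] [NonUnitalNonAssocSemiring R]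
    (M N : Matrix n n R) : (M * N).trace = ∑ i, ∑ j, M i j * N j i := rfl

lemma Matrix.trace_mul_diagonal_mul_mul_diagonal {n R : Type*} [Fintype n] [DecidableEq n]
    [NonUnitalSemiring R] (M : Matrix n n R) (d : n → R) :
    (M * diagonal d * M * diagonal d).trace = ∑ i, ∑ j, M i j * d j * (M j i * d i) := by
  rw [Matrix.mul_assoc (M * diagonal d), trace_mul_eq_sum_sum]
  simp only [mul_diagonal]

lemma trace_fpt_mul_fpt (ρ : Matrix (A₁ ⊕ A₂ → Bool) (A₁ ⊕ A₂ → Bool) ℂ) :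
    (fpt ρ * fpt ρ).trace =
      ∑ n, ∑ n', fptPhase n n' * fptPhase n' n * (ρ n n' * ρ n' n) := by
  let g (p : (A₁ ⊕ A₂ → Bool) × (A₁ ⊕ A₂ → Bool)) : ℂ :=
    fptPhase p.1 p.2 * ρ p.1 p.2 * (fptPhase p.2 p.1 * ρ p.2 p.1)
  calc (fpt ρ * fpt ρ).trace = ∑ p, g (mix_prod_involutive.toPerm _ p) := by
        rw [trace_mul_eq_sum_sum, ← Fintype.sum_prod_type']
        rfl
    _ = ∑ p, g p := Equiv.sum_comp _ g
    _ = _ := by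
        rw [Fintype.sum_prod_type]
        exact Fintype.sum_congr _ _ fun n => Fintype.sum_congr _ _ fun n' => by ring

/-- Rank-2 untwisted moment: `Tr[(ρ^{T₂})²] = Tr(ρ X₂ ρ X₂)` for every linear operator
`ρ` on the Fock space. -/
theorem trace_fpt_sq (ρ : Matrix (A₁ ⊕ A₂ → Bool) (A₁ ⊕ A₂ → Bool) ℂ) :
    (fpt ρ * fpt ρ).trace = (ρ * X2 * ρ * X2).trace := by
  rw [trace_fpt_mul_fpt, X2, trace_mul_diagonal_mul_mul_diagonal]
  refine Fintype.sum_congr _ _ fun n => Fintype.sum_congr _ _ fun n' => ?_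
  rw [fptPhase_mul_fptPhase_swap]
  ring
end
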